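/- The linear Shannon capacity of C_5 equals √5: there exist linear independent sets in C_5^{2k} of size 5^k for all k (powers of {(x,2x)}), and no linear independent set in C_5^n exceeds size 5^{n/2}. -/

import Mathlib

open SimpleGraph MvPolynomial

/-- The `n`-th strong power of a graph `G`: vertices are `n`-tuples, and two distinct
tuples are adjacent iff in every coordinate the entries are equal or adjacent in `G`. -/
def strongPow {V : Type*} (G : SimpleGraph V) (n : ℕ) : SimpleGraph (Fin n → V) where
  Adj x y := x ≠ y ∧ ∀ i, x i = y i ∨ G.Adj (x i) (y i)
  symm := by
    constructor
    rintro x y ⟨hne, h⟩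
    exact ⟨hne.symm, fun i => (h i).imp Eq.symm (fun hadj => hadj.symm)⟩
  loopless := by
    constructor
    rintro x ⟨hne, -⟩
    exact hne rfl

/-- The Cayley graph on the additive group of a field `F` with connection set `S`:
`u ~ v` iff `u ≠ v` and `u - v ∈ S` (symmetrized; for symmetric `S` this is `u - v ∈ S`). -/
def cayley {F : Type*} [Field F] (S : Set F) : SimpleGraph F where
  Adj u v := u ≠ v ∧ (u - v ∈ S ∨ v - u ∈ S)
  symm := by
    constructor
    rintro u v ⟨hne, h⟩
    exact ⟨hne.symm, h.symm⟩
  loopless := by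
    constructor
    rintro u ⟨hne, -⟩
    exact hne rfl

/-- A set `I` is independent in `G` if no two of its elements are adjacent. -/
def IsIndep {V : Type*} (G : SimpleGraph V) (I : Set V) : Prop :=
  ∀ x ∈ I, ∀ y ∈ I, ¬ G.Adj x y

/-- The linear independence number of the `n`-th strong power of a graph on `F`:
the largest size of an independent set which is an `F`-linear subspace of `F^n`. -/
noncomputable def alphaLin {F : Type*} [Field F] [Fintype F] (G : SimpleGraph F) (n : ℕ) : ℕ :=
  sSup {c | ∃ W : Submodule F (Fin n → F),
    IsIndep (strongPow G n) (W : Set (Fin n → F)) ∧ Nat.card W = c}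

instance : Fact (Nat.Prime 5) := ⟨by norm_num⟩

/-!
A subspace `W ≤ 𝔽₅ⁿ` is independent in the strong power of `C₅` iff every nonzero `w ∈ W` has a
coordinate in `{2, 3}`, i.e. a root of `X² + 1`. In coordinates `y` on `W`, the polynomial
`∏ᵢ (wᵢ(y)² + 1)` of degree `2n` then vanishes at every `y ≠ 0` but not at `y = 0`, so its sum over
`𝔽₅^(dim W)` is nonzero; by the Chevalley–Warning sum lemma this forces `(5 - 1) dim W ≤ 2n`, i.e.
`|W| ≤ 5^(n/2)`. Conversely the line `{(x, 2x)} ⊆ 𝔽₅²` meets `{2, 3}` in a coordinate of every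
nonzero vector, since `x² = 1` forces `(2x)² = -1`, and so do its Kronecker powers.
-/

namespace MvPolynomial

variable {σ R : Type*} [CommRing R]

theorem totalDegree_aeval_le (p : Polynomial R) (f : MvPolynomial σ R) :
    (Polynomial.aeval f p).totalDegree ≤ p.natDegree * f.totalDegree := by
  rw [Polynomial.aeval_eq_sum_range]
  refine (totalDegree_finsetSum _ _).trans (Finset.sup_le fun i hi => ?_)
  calc (p.coeff i • f ^ i).totalDegree ≤ (f ^ i).totalDegree := totalDegree_smul_le _ _
    _ ≤ i * f.totalDegree := totalDegree_pow _ _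
    _ ≤ p.natDegree * f.totalDegree :=
      Nat.mul_le_mul_right _ (Nat.lt_succ_iff.mp (Finset.mem_range.mp hi))

theorem totalDegree_sum_C_mul_X_le_one [Fintype σ] (c : σ → R) :
    (∑ j, C (c j) * X j : MvPolynomial σ R).totalDegree ≤ 1 :=
  (IsHomogeneous.sum _ _ _ fun j _ => isHomogeneous_C_mul_X (c j) j).totalDegree_le

theorem eval_polynomial_aeval (p : Polynomial R) (f : MvPolynomial σ R) (y : σ → R) :
    eval y (Polynomial.aeval f p) = p.eval (eval y f) := by
  simpa [Polynomial.coe_aeval_eq_eval, coe_aeval_eq_eval] using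
    (Polynomial.aeval_algHom_apply (aeval y) f p).symm

end MvPolynomial

theorem card_sub_one_mul_finrank_le_of_exists_isRoot {F ι : Type*} [Field F] [Fintype F]
    [Fintype ι] (p : Polynomial F) (hp : ¬ p.IsRoot 0) (W : Submodule F (ι → F))
    (hW : ∀ w ∈ W, w ≠ 0 → ∃ i, p.IsRoot (w i)) :
    (Fintype.card F - 1) * Module.finrank F W ≤ p.natDegree * Fintype.card ι := by
  set d := Module.finrank F W
  let b := Module.finBasis F W
  let coord : ι → MvPolynomial (Fin d) F := fun i => ∑ j, C ((b j : ι → F) i) * X j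
  let g : MvPolynomial (Fin d) F := ∏ i, Polynomial.aeval (coord i) p
  have eval_g (y : Fin d → F) : eval y g = ∏ i, p.eval ((b.equivFun.symm y : ι → F) i) := by
    simp [g, coord, eval_polynomial_aeval, b.equivFun_symm_apply, mul_comm]
  have hdeg : g.totalDegree ≤ p.natDegree * Fintype.card ι :=
    calc g.totalDegree ≤ ∑ i, (Polynomial.aeval (coord i) p).totalDegree :=
          totalDegree_finsetProd _ _
      _ ≤ ∑ _i : ι, p.natDegree := Finset.sum_le_sum fun i _ =>
          (totalDegree_aeval_le p _).trans
            (mul_le_of_le_one_right' (totalDegree_sum_C_mul_X_le_one _))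
      _ = p.natDegree * Fintype.card ι := by simp [mul_comm]
  have hsum : ∑ y, eval y g = p.eval 0 ^ Fintype.card ι := by
    rw [Fintype.sum_eq_single 0]
    · rw [eval_g]; simp
    · intro y hy
      have hy' : (b.equivFun.symm y : ι → F) ≠ 0 := by
        rwa [Ne, ZeroMemClass.coe_eq_zero, LinearEquiv.map_eq_zero_iff]
      obtain ⟨i, hi⟩ := hW _ (b.equivFun.symm y).2 hy'
      rw [eval_g]
      exact Finset.prod_eq_zero (Finset.mem_univ i) hi
  by_contra! hlt
  have := sum_eval_eq_zero g (by simpa [d] using hdeg.trans_lt hlt)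
  exact pow_ne_zero _ hp (hsum ▸ this)

section Cayley

variable {F : Type*} [Field F] (S : Set F)

theorem cayley_adj_iff_sub_adj_zero {u v : F} :
    (cayley S).Adj u v ↔ (cayley S).Adj (u - v) 0 := by
  simp [cayley, sub_eq_zero]

theorem strongPow_cayley_adj_iff_sub_adj_zero {n : ℕ} {x y : Fin n → F} :
    (strongPow (cayley S) n).Adj x y ↔ (strongPow (cayley S) n).Adj (x - y) 0 := by
  simp [strongPow, sub_eq_zero, ← cayley_adj_iff_sub_adj_zero]

theorem isIndep_strongPow_cayley_iff {n : ℕ} (W : Submodule F (Fin n → F)) :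
    IsIndep (strongPow (cayley S) n) (W : Set (Fin n → F)) ↔
      ∀ w ∈ W, ¬ (strongPow (cayley S) n).Adj w 0 := by
  refine ⟨fun hW w hw => hW w hw 0 W.zero_mem, fun hW x hx y hy => ?_⟩
  rw [strongPow_cayley_adj_iff_sub_adj_zero]
  exact hW _ (W.sub_mem hx hy)

end Cayley

local notation "C₅" => cayley ({1, 4} : Set (ZMod 5))

theorem eq_zero_or_C5_adj_zero_iff (a : ZMod 5) : (a = 0 ∨ (C₅).Adj a 0) ↔ a ^ 2 ≠ -1 := by
  simp only [cayley, Set.mem_insert_iff, Set.mem_singleton_iff]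
  revert a
  decide

theorem strongPow_C5_adj_zero_iff {n : ℕ} {w : Fin n → ZMod 5} :
    (strongPow C₅ n).Adj w 0 ↔ w ≠ 0 ∧ ∀ i, w i ^ 2 ≠ -1 := by
  simp only [strongPow, Pi.zero_apply, ← eq_zero_or_C5_adj_zero_iff]

theorem isIndep_strongPow_C5_iff {n : ℕ} (W : Submodule (ZMod 5) (Fin n → ZMod 5)) :
    IsIndep (strongPow C₅ n) (W : Set (Fin n → ZMod 5)) ↔
      ∀ w ∈ W, w ≠ 0 → ∃ i, w i ^ 2 = -1 := by
  simp [isIndep_strongPow_cayley_iff, strongPow_C5_adj_zero_iff]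

theorem two_mul_finrank_le_of_isIndep {n : ℕ} {W : Submodule (ZMod 5) (Fin n → ZMod 5)}
    (hW : IsIndep (strongPow C₅ n) (W : Set (Fin n → ZMod 5))) :
    2 * Module.finrank (ZMod 5) W ≤ n := by
  have := card_sub_one_mul_finrank_le_of_exists_isRoot (Polynomial.X ^ 2 + Polynomial.C 1)
    (by simp) W fun w hw hw0 => by
      obtain ⟨i, hi⟩ := (isIndep_strongPow_C5_iff W).mp hW w hw hw0
      exact ⟨i, by simp [hi]⟩
  rw [ZMod.card, Polynomial.natDegree_X_pow_add_C, Fintype.card_fin] at this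
  omega

theorem natCard_le_sqrt_five_pow_of_isIndep {n : ℕ} {W : Submodule (ZMod 5) (Fin n → ZMod 5)}
    (hW : IsIndep (strongPow C₅ n) (W : Set (Fin n → ZMod 5))) :
    (Nat.card W : ℝ) ≤ (5 : ℝ) ^ ((n : ℝ) / 2) := by
  have hdim : (Module.finrank (ZMod 5) W : ℝ) ≤ n / 2 := by
    have := two_mul_finrank_le_of_isIndep hW
    rw [le_div_iff₀ two_pos]
    exact_mod_cast (mul_comm _ _).trans_le this
  rw [Module.natCard_eq_pow_finrank (K := ZMod 5), Nat.card_zmod, Nat.cast_pow,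
    ← Real.rpow_natCast]
  exact Real.rpow_le_rpow_of_exponent_le (by norm_num) (by exact_mod_cast hdim)

section Kronecker

variable {F : Type*} [Field F] {m k : ℕ}

def kronLeft (c : Fin m → F) : (Fin k → F) →ₗ[F] (Fin (m * k) → F) where
  toFun x i := c (finProdFinEquiv.symm i).1 * x (finProdFinEquiv.symm i).2
  map_add' x y := by ext; simp [mul_add]
  map_smul' a x := by ext; simp [mul_left_comm]

@[simp]
theorem kronLeft_apply_finProdFinEquiv (c : Fin m → F) (x : Fin k → F) (a : Fin m) (b : Fin k) :
    kronLeft c x (finProdFinEquiv (a, b)) = c a * x b := by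
  simp only [kronLeft, LinearMap.coe_mk, AddHom.coe_mk, Equiv.symm_apply_apply]

theorem kronLeft_injective {c : Fin m → F} (hc : c ≠ 0) :
    Function.Injective (kronLeft c : (Fin k → F) →ₗ[F] _) := by
  obtain ⟨a, ha⟩ := Function.ne_iff.mp hc
  refine (injective_iff_map_eq_zero _).mpr fun x hx => funext fun b => ?_
  have := congrFun hx (finProdFinEquiv (a, b))
  simp only [kronLeft_apply_finProdFinEquiv, Pi.zero_apply, mul_eq_zero] at this
  exact this.resolve_left ha

end Kronecker

theorem sq_eq_neg_one_or_two_mul_sq_eq_neg_one {a : ZMod 5} (ha : a ≠ 0) :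
    a ^ 2 = -1 ∨ (2 * a) ^ 2 = -1 := by
  revert a
  decide

/-- The `k`-th power of the line `{(x, 2x)} ⊆ 𝔽₅²`. -/
def pentagonCode (k : ℕ) : Submodule (ZMod 5) (Fin (2 * k) → ZMod 5) :=
  LinearMap.range (kronLeft ![1, 2])

theorem isIndep_pentagonCode (k : ℕ) :
    IsIndep (strongPow C₅ (2 * k)) (pentagonCode k : Set (Fin (2 * k) → ZMod 5)) := by
  rw [isIndep_strongPow_C5_iff]
  rintro _ ⟨x, rfl⟩ hx
  obtain ⟨b, hb⟩ := Function.ne_iff.mp (ne_of_apply_ne _ (hx.trans_eq (map_zero _).symm))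
  rcases sq_eq_neg_one_or_two_mul_sq_eq_neg_one hb with h | h
  · exact ⟨finProdFinEquiv (0, b), by simpa using h⟩
  · exact ⟨finProdFinEquiv (1, b), by simpa using h⟩

theorem natCard_pentagonCode (k : ℕ) : Nat.card (pentagonCode k) = 5 ^ k := by
  rw [Module.natCard_eq_pow_finrank (K := ZMod 5), Nat.card_zmod, pentagonCode,
    LinearMap.finrank_range_of_inj (kronLeft_injective (by simp)), Module.finrank_fin_fun]

theorem isIndep_bot {R M : Type*} [Semiring R] [AddCommMonoid M] [Module R M]
    (G : SimpleGraph M) : IsIndep G ((⊥ : Submodule R M) : Set M) := by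
  rintro x hx y hy hxy
  rw [SetLike.mem_coe, Submodule.mem_bot] at hx hy
  exact hxy.ne (hx.trans hy.symm)

section AlphaLin

variable {F : Type*} [Field F] [Fintype F] (G : SimpleGraph F) (n : ℕ)

theorem bddAbove_natCard_isIndep : BddAbove {c | ∃ W : Submodule F (Fin n → F),
    IsIndep (strongPow G n) (W : Set (Fin n → F)) ∧ Nat.card W = c} := by
  refine ⟨Nat.card (Fin n → F), ?_⟩
  rintro _ ⟨W, -, rfl⟩
  exact Nat.card_le_card_of_injective _ Subtype.val_injective

theorem exists_isIndep_natCard_eq_alphaLin :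
    ∃ W : Submodule F (Fin n → F),
      IsIndep (strongPow G n) (W : Set (Fin n → F)) ∧ Nat.card W = alphaLin G n := by
  refine Nat.sSup_mem ?_ (bddAbove_natCard_isIndep G n)
  exact ⟨_, ⊥, isIndep_bot _, rfl⟩

variable {G n} in
theorem natCard_le_alphaLin {W : Submodule F (Fin n → F)}
    (hW : IsIndep (strongPow G n) (W : Set (Fin n → F))) : Nat.card W ≤ alphaLin G n :=
  le_csSup (bddAbove_natCard_isIndep G n) ⟨W, hW, rfl⟩

end AlphaLin

theorem alphaLin_C5_le (n : ℕ) : (alphaLin C₅ n : ℝ) ≤ (5 : ℝ) ^ ((n : ℝ) / 2) := by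
  obtain ⟨W, hW, hcard⟩ := exists_isIndep_natCard_eq_alphaLin C₅ n
  exact hcard ▸ natCard_le_sqrt_five_pow_of_isIndep hW

theorem five_le_alphaLin_C5_two : 5 ≤ alphaLin C₅ 2 :=
  (natCard_pentagonCode 1).symm.trans_le (natCard_le_alphaLin (isIndep_pentagonCode 1))

theorem Real.rpow_one_div_le_sqrt {x b m : ℝ} (hx : 0 ≤ x) (hb : 0 ≤ b) (hm : 0 < m)
    (h : x ≤ b ^ (m / 2)) : x ^ (1 / m) ≤ √b :=
  calc x ^ (1 / m) ≤ (b ^ (m / 2)) ^ (1 / m) := Real.rpow_le_rpow hx h (by positivity)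
    _ = √b := by rw [← Real.rpow_mul hb, Real.sqrt_eq_rpow]; field_simp

theorem stmt10 :
    (∀ k : ℕ, ∃ W : Submodule (ZMod 5) (Fin (2 * k) → ZMod 5),
      IsIndep (strongPow (cayley ({1, 4} : Set (ZMod 5))) (2 * k)) (W : Set (Fin (2 * k) → ZMod 5)) ∧
      Nat.card W = 5 ^ k) ∧
    (∀ n : ℕ, ∀ W : Submodule (ZMod 5) (Fin n → ZMod 5),
      IsIndep (strongPow (cayley ({1, 4} : Set (ZMod 5))) n) (W : Set (Fin n → ZMod 5)) →
      (Nat.card W : ℝ) ≤ (5 : ℝ) ^ ((n : ℝ) / 2)) ∧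
    (⨆ n : ℕ, ((alphaLin (cayley ({1, 4} : Set (ZMod 5))) (n + 1) : ℝ) ^
        ((1 : ℝ) / ((n : ℝ) + 1)))) = Real.sqrt 5 := by
  refine ⟨fun k => ⟨_, isIndep_pentagonCode k, natCard_pentagonCode k⟩,
    fun n W hW => natCard_le_sqrt_five_pow_of_isIndep hW, ?_⟩
  have hle (n : ℕ) : (alphaLin C₅ (n + 1) : ℝ) ^ ((1 : ℝ) / ((n : ℝ) + 1)) ≤ √5 :=
    Real.rpow_one_div_le_sqrt (Nat.cast_nonneg _) (by norm_num) (by positivity)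
      (by exact_mod_cast alphaLin_C5_le (n + 1))
  refine le_antisymm (ciSup_le hle) (le_ciSup_of_le ⟨√5, Set.forall_mem_range.2 hle⟩ 1 ?_)
  simp only [Real.sqrt_eq_rpow, Nat.cast_one, one_add_one_eq_two]
  exact Real.rpow_le_rpow (by norm_num) (by exact_mod_cast five_le_alphaLin_C5_two) (by norm_num)
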